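/- arXiv:1607.03591 — 4 statements merged into one kernel-verified Lean document; each statement's English description precedes it below -/
import Mathlib

section
/- Let μ be a Gaussian measure on a separable Banach space W. Then the inclusion of W* into L²(W, μ) is a compact operator: for every sequence (f_n) in W* with ‖f_n‖_{W*} ≤ 1 for all n, there exists a subsequence (f_{n_k}) and an f ∈ W* such that f_{n_k} → f in the norm of L²(W, μ). -/
/-!
By sequential Banach–Alaoglu, a bounded sequence in the dual of a separable space has a
subsequence `f (φ k)` converging pointwise to some `g ∈ W*`. Each difference `f (φ k) - g` is a
centered Gaussian of some variance `v k` under `μ`, so its characteristic function at `1` is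
`exp (-v k / 2)`; by dominated convergence it tends to `1`, hence `v k → 0`, and `v k` is exactly
the squared `L²(μ)` norm of `f (φ k) - g`.
-/

open MeasureTheory ProbabilityTheory Filter
open scoped NNReal ENNReal Topology

/-- A Borel probability measure on a separable Banach space is Gaussian if every
continuous linear functional, viewed as a random variable, has a centered Gaussian
distribution (possibly degenerate, i.e. a Dirac mass at `0`). -/
def IsGaussianMeasure {W : Type*} [NormedAddCommGroup W] [NormedSpace ℝ W]
    [MeasurableSpace W] (μ : Measure W) : Prop :=
  IsProbabilityMeasure μ ∧ ∀ f : W →L[ℝ] ℝ, ∃ v : ℝ≥0, μ.map f = gaussianReal 0 v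

theorem StrongDual.exists_strictMono_tendsto_apply_of_norm_le
    {𝕜 E : Type*} [NontriviallyNormedField 𝕜] [ProperSpace 𝕜]
    [NormedAddCommGroup E] [NormedSpace 𝕜 E] [TopologicalSpace.SeparableSpace E]
    {f : ℕ → StrongDual 𝕜 E} {r : ℝ} (hf : ∀ n, ‖f n‖ ≤ r) :
    ∃ (g : StrongDual 𝕜 E) (φ : ℕ → ℕ), StrictMono φ ∧
      ∀ x, Tendsto (fun k ↦ f (φ k) x) atTop (𝓝 (g x)) := by
  obtain ⟨g, -, φ, hφ, hg⟩ := WeakDual.isSeqCompact_closedBall 𝕜 E 0 r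
    (x := fun n ↦ StrongDual.toWeakDual (f n)) fun n ↦ by simpa using hf n
  exact ⟨WeakDual.toStrongDual g, φ, hφ, fun x ↦ (WeakDual.eval_continuous x).tendsto g |>.comp hg⟩

section RealRandomVariables

variable {Ω : Type*} [MeasurableSpace Ω] {P : Measure Ω}

lemma integral_sq_eq_of_map_eq_gaussianReal {X : Ω → ℝ} (hX : AEMeasurable X P) {v : ℝ≥0}
    (hXv : P.map X = gaussianReal 0 v) :
    ∫ ω, X ω ^ 2 ∂P = v := by
  rw [← integral_map (f := fun x ↦ x ^ 2) hX (by fun_prop), hXv,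
    ← variance_fun_id_gaussianReal (μ := 0), variance_eq_integral measurable_id'.aemeasurable]
  simp

lemma tendsto_charFun_map_of_ae_tendsto [IsFiniteMeasure P] {X : ℕ → Ω → ℝ} {Y : Ω → ℝ}
    (hX : ∀ k, AEMeasurable (X k) P) (hY : AEMeasurable Y P)
    (hXY : ∀ᵐ ω ∂P, Tendsto (fun k ↦ X k ω) atTop (𝓝 (Y ω))) (t : ℝ) :
    Tendsto (fun k ↦ charFun (P.map (X k)) t) atTop (𝓝 (charFun (P.map Y) t)) := by
  have hexp : Continuous fun x : ℝ ↦ Complex.exp (t * x * Complex.I) := by fun_prop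
  simp only [charFun_apply_real, integral_map (hX _) hexp.aestronglyMeasurable,
    integral_map hY hexp.aestronglyMeasurable]
  refine tendsto_integral_of_dominated_convergence (fun _ ↦ 1)
    (fun k ↦ (hexp.measurable.comp_aemeasurable (hX k)).aestronglyMeasurable)
    (integrable_const 1) (fun k ↦ ae_of_all _ fun ω ↦ ?_) ?_
  · exact_mod_cast (Complex.norm_exp_ofReal_mul_I (t * X k ω)).le
  · filter_upwards [hXY] with ω hω
    exact (hexp.tendsto _).comp hω

lemma tendsto_zero_of_tendsto_charFun_gaussianReal {v : ℕ → ℝ≥0}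
    (hv : Tendsto (fun k ↦ charFun (gaussianReal 0 (v k)) 1) atTop (𝓝 1)) :
    Tendsto (fun k ↦ (v k : ℝ)) atTop (𝓝 0) := by
  have hexp : Tendsto (fun k ↦ Real.exp (-(v k / 2))) atTop (𝓝 1) := by
    convert (Complex.continuous_re.tendsto _).comp hv using 2 with k
    · simp only [Function.comp_apply, charFun_gaussianReal]
      rw [← Complex.exp_ofReal_re]
      simp
    · simp
  have := ((Real.continuousAt_log one_ne_zero).tendsto.comp hexp).const_mul (-2)
  simp only [Function.comp_def, Real.log_exp, Real.log_one, mul_zero] at this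
  convert this using 2 with k
  ring

lemma tendsto_integral_sq_of_ae_tendsto_zero_of_map_eq_gaussianReal [IsProbabilityMeasure P]
    {X : ℕ → Ω → ℝ} {v : ℕ → ℝ≥0} (hX : ∀ k, AEMeasurable (X k) P)
    (hXv : ∀ k, P.map (X k) = gaussianReal 0 (v k))
    (hX0 : ∀ᵐ ω ∂P, Tendsto (fun k ↦ X k ω) atTop (𝓝 0)) :
    Tendsto (fun k ↦ ∫ ω, X k ω ^ 2 ∂P) atTop (𝓝 0) := by
  have hcharFun := tendsto_charFun_map_of_ae_tendsto hX aemeasurable_const hX0 1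
  simp only [hXv] at hcharFun
  have hv := tendsto_zero_of_tendsto_charFun_gaussianReal (by simpa using hcharFun)
  simpa only [integral_sq_eq_of_map_eq_gaussianReal (hX _) (hXv _)] using hv

end RealRandomVariables

theorem dual_inclusion_into_L2_compact_general
    {W : Type*} [NormedAddCommGroup W] [NormedSpace ℝ W]
    [SecondCountableTopology W] [MeasurableSpace W] [BorelSpace W]
    (μ : Measure W) (hμ : IsGaussianMeasure μ)
    (f : ℕ → W →L[ℝ] ℝ) (hf : ∀ n, ‖f n‖ ≤ 1) :
    ∃ (g : W →L[ℝ] ℝ) (φ : ℕ → ℕ), StrictMono φ ∧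
      Tendsto (fun k => ∫ x, (f (φ k) x - g x) ^ 2 ∂μ) atTop (𝓝 0) := by
  have := hμ.1
  obtain ⟨g, φ, hφ, hfg⟩ := StrongDual.exists_strictMono_tendsto_apply_of_norm_le hf
  choose v hv using fun k ↦ hμ.2 (f (φ k) - g)
  refine ⟨g, φ, hφ, tendsto_integral_sq_of_ae_tendsto_zero_of_map_eq_gaussianReal
    (fun k ↦ (f (φ k) - g).continuous.aemeasurable) hv (ae_of_all _ fun x ↦ ?_)⟩
  simpa using (hfg x).sub_const (g x)

/-- For a Gaussian measure `μ` on a separable Banach space `W`, the inclusion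
`W* ↪ L²(W, μ)` is a compact operator: every sequence in the unit ball of `W*`
has a subsequence converging in `L²(W, μ)` to an element of `W*`. -/
theorem dual_inclusion_into_L2_compact
    {W : Type*} [NormedAddCommGroup W] [NormedSpace ℝ W] [CompleteSpace W]
    [SecondCountableTopology W] [MeasurableSpace W] [BorelSpace W]
    (μ : Measure W) (hμ : IsGaussianMeasure μ)
    (f : ℕ → W →L[ℝ] ℝ) (hf : ∀ n, ‖f n‖ ≤ 1) :
    ∃ (g : W →L[ℝ] ℝ) (φ : ℕ → ℕ), StrictMono φ ∧
      Tendsto (fun k => ∫ x, (f (φ k) x - g x) ^ 2 ∂μ) atTop (𝓝 0) :=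
  dual_inclusion_into_L2_compact_general μ hμ f hf
end

section
/- Let y = (y(1), y(2), ...) be a sequence of real numbers such that the series ∑_{i=1}^∞ y(i)·g(i) converges for every g ∈ ℓ². Then y ∈ ℓ², i.e. ∑_{i=1}^∞ |y(i)|² < ∞. -/
/-!
The truncations `vₙ = (y 0, …, y (n-1), 0, …)` lie in `ℓ²`, and `⟪vₙ, g⟫` is the `n`-th partial
sum of `∑ y i * g i`. These converge, so `(vₙ)` is weakly bounded, hence norm bounded by the uniform
boundedness principle; since `‖vₙ‖²` is the `n`-th partial sum of `∑ y i ^ 2`, that series converges.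
-/

open Filter
open scoped Topology InnerProductSpace lp

theorem exists_norm_le_of_forall_exists_norm_inner_le {𝕜 E ι : Type*} [RCLike 𝕜]
    [NormedAddCommGroup E] [InnerProductSpace 𝕜 E] [CompleteSpace E] (v : ι → E)
    (h : ∀ g : E, ∃ C, ∀ i, ‖⟪v i, g⟫_𝕜‖ ≤ C) : ∃ C, ∀ i, ‖v i‖ ≤ C := by
  obtain ⟨C, hC⟩ := banach_steinhaus (g := fun i => innerSL 𝕜 (v i)) h
  exact ⟨C, fun i => (innerSL_apply_norm 𝕜 (v i)).symm.trans_le (hC i)⟩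

section RealL2

variable {ι : Type*}

theorem summable_sq_coe_l2 (g : ℓ²(ι, ℝ)) : Summable fun i => g i ^ 2 := by
  simpa using (lp.memℓp g).summable (by norm_num)

variable [DecidableEq ι] (s : Finset ι) (y : ι → ℝ)

theorem inner_sum_lpSingle_left (g : ℓ²(ι, ℝ)) :
    ⟪∑ i ∈ s, lp.single 2 i (y i), g⟫_ℝ = ∑ i ∈ s, y i * g i := by
  simp [sum_inner, lp.inner_single_left, mul_comm]

theorem norm_sum_lpSingle_sq : ‖∑ i ∈ s, lp.single 2 i (y i)‖ ^ 2 = ∑ i ∈ s, y i ^ 2 := by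
  simpa using lp.norm_sum_single (p := 2) (by norm_num) y s

end RealL2

/-- If `y` is a real sequence such that `∑ y i * g i` converges for every
square-summable sequence `g`, then `y` is itself square-summable. -/
theorem mem_l2_of_series_converges
    (y : ℕ → ℝ)
    (h : ∀ g : ℕ → ℝ, Summable (fun i => (g i) ^ 2) →
      ∃ L : ℝ, Tendsto (fun n => ∑ i ∈ Finset.range n, y i * g i) atTop (𝓝 L)) :
    Summable fun i => (y i) ^ 2 := by
  set v : ℕ → ℓ²(ℕ, ℝ) := fun n => ∑ i ∈ Finset.range n, lp.single 2 i (y i)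
  obtain ⟨C, hC⟩ : ∃ C, ∀ n, ‖v n‖ ≤ C := by
    refine exists_norm_le_of_forall_exists_norm_inner_le (𝕜 := ℝ) v fun g => ?_
    obtain ⟨L, hL⟩ := h g (summable_sq_coe_l2 g)
    obtain ⟨C, hC⟩ := hL.norm.bddAbove_range
    exact ⟨C, fun n => by simpa [v, inner_sum_lpSingle_left] using hC ⟨n, rfl⟩⟩
  refine summable_of_sum_range_le (c := C ^ 2) (fun i => sq_nonneg _) fun n => ?_
  rw [← norm_sum_lpSingle_sq]
  exact pow_le_pow_left₀ (norm_nonneg _) (hC n) 2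
end

section
/- Let (X_n) be a sequence of real random variables with X_n distributed as a centered Gaussian N(0, σ_n²) (allowing σ_n = 0, in which case X_n is the constant 0), and suppose X_n converges in distribution to a real random variable X. Then the limit σ² = lim_{n→∞} σ_n² exists and is finite, and X is distributed as N(0, σ²), i.e. X is a centered Gaussian (possibly degenerate) random variable with variance σ². -/
open MeasureTheory ProbabilityTheory Filter
open scoped NNReal Topology BoundedContinuousFunction

/-! Weak convergence gives pointwise convergence of the characteristic functions
`exp (-vₙ t² / 2)`. Since the characteristic function of the limit is continuous and equal to `1`
at the origin, it does not vanish at some `t ≠ 0`; taking logarithms there shows that `vₙ`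
converges to some `V`. The characteristic function of the limit is then `exp (-V t² / 2)`,
which determines the law. -/

lemma exists_ne_zero_charFun_ne_zero {E : Type*} [NormedAddCommGroup E] [InnerProductSpace ℝ E]
    [Nontrivial E] [MeasurableSpace E] [BorelSpace E] [SecondCountableTopology E]
    (μ : Measure E) [IsProbabilityMeasure μ] : ∃ t ≠ 0, charFun μ t ≠ 0 := by
  have hne : ∀ᶠ t in 𝓝 0, charFun μ t ≠ 0 :=
    continuous_charFun.continuousAt.eventually_ne (by simp [charFun_zero])
  have hpunctured : ∀ᶠ t in 𝓝[≠] 0, t ≠ 0 ∧ charFun μ t ≠ 0 :=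
    eventually_mem_nhdsWithin.and (nhdsWithin_le_nhds hne)
  exact hpunctured.exists

lemma norm_charFun_gaussianReal (μ : ℝ) (v : ℝ≥0) (t : ℝ) :
    ‖charFun (gaussianReal μ v) t‖ = Real.exp (-(v * t ^ 2 / 2)) := by
  rw [charFun_gaussianReal, Complex.norm_exp]
  congr 1
  simp [← Complex.ofReal_pow]

lemma continuous_charFun_gaussianReal (t : ℝ) :
    Continuous fun p : ℝ × ℝ≥0 => charFun (gaussianReal p.1 p.2) t := by
  simp only [charFun_gaussianReal]
  fun_prop

lemma tendsto_variance_of_tendsto_charFun_gaussianReal {α : Type*} {l : Filter α} {m : α → ℝ}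
    {v : α → ℝ≥0} {t : ℝ} {z : ℂ} (ht : t ≠ 0) (hz : z ≠ 0)
    (h : Tendsto (fun a => charFun (gaussianReal (m a) (v a)) t) l (𝓝 z)) :
    Tendsto v l (𝓝 (-2 * Real.log ‖z‖ / t ^ 2).toNNReal) := by
  have hexp : Tendsto (fun a => Real.exp (-(v a * t ^ 2 / 2))) l (𝓝 ‖z‖) := by
    simpa only [norm_charFun_gaussianReal] using h.norm
  have hlog := hexp.log (norm_ne_zero_iff.2 hz)
  simp only [Real.log_exp] at hlog
  have hv : Tendsto (fun a => (v a : ℝ)) l (𝓝 (-2 * Real.log ‖z‖ / t ^ 2)) := by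
    refine ((hlog.const_mul (-2)).div_const (t ^ 2)).congr fun a => ?_
    field_simp
  simpa [Function.comp_def] using (continuous_real_toNNReal.tendsto _).comp hv

/-- If a sequence of centered Gaussian laws `N(0, σₙ²)` (degenerate variance allowed)
converges weakly to the law `ν` of a finite random variable, then `σ² = lim σₙ²`
exists (and is finite) and `ν = N(0, σ²)` is a centered Gaussian law. -/
theorem weak_limit_of_gaussians_is_gaussian
    (v : ℕ → ℝ≥0) (ν : Measure ℝ) [IsProbabilityMeasure ν]
    (hconv : ∀ f : ℝ →ᵇ ℝ,
      Tendsto (fun n => ∫ x, f x ∂(gaussianReal 0 (v n))) atTop (𝓝 (∫ x, f x ∂ν))) :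
    ∃ V : ℝ≥0, Tendsto v atTop (𝓝 V) ∧ ν = gaussianReal 0 V := by
  have hchar : ∀ t, Tendsto (fun n => charFun (gaussianReal 0 (v n)) t) atTop
      (𝓝 (charFun ν t)) :=
    ProbabilityMeasure.tendsto_iff_tendsto_charFun (μ₀ := ⟨ν, ‹_›⟩)
      (μ := fun n => ⟨gaussianReal 0 (v n), inferInstance⟩) |>.1
      (ProbabilityMeasure.tendsto_iff_forall_integral_tendsto.2 hconv)
  obtain ⟨t, ht, hνt⟩ := exists_ne_zero_charFun_ne_zero ν
  have hV := tendsto_variance_of_tendsto_charFun_gaussianReal ht hνt (hchar t)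
  refine ⟨_, hV, Measure.ext_of_charFun (funext fun s => tendsto_nhds_unique (hchar s) ?_)⟩
  exact ((continuous_charFun_gaussianReal s).tendsto _).comp (tendsto_const_nhds.prodMk_nhds hV)
end

section
/- Let W be a separable Banach space. Then there exist a separable Hilbert space H and a continuous injective linear map ι : H → W whose range is dense in W; i.e. W contains a densely and continuously embedded separable Hilbert space. -/
/-!
Take a dense sequence in `W` and rescale it to `y n` with `∑ ‖y n‖ < ∞`; the rescaled vectors still
span a dense subspace. On `ℓ²(ℕ, ℝ)` with its standard orthonormal basis `e n`, the series
`T = ∑ ⟪e n, ·⟫ • y n` converges in operator norm and `T (e n) = y n`, so `T` has dense range.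
Restricting `T` to the orthogonal complement of its kernel makes it injective without changing its
range, and that complement is a separable Hilbert space.
-/

open TopologicalSpace Submodule
open scoped lp

section

variable {R E M : Type*} [Ring R] [AddCommGroup E] [Module R E] [AddCommGroup M] [Module R M]

theorem LinearMap.injective_comp_subtype_of_isCompl_ker {f : E →ₗ[R] M} {q : Submodule R E}
    (h : IsCompl (LinearMap.ker f) q) : Function.Injective (f ∘ₗ q.subtype) := by
  rw [← LinearMap.ker_eq_bot, LinearMap.ker_comp, ← disjoint_iff_comap_eq_bot]
  exact h.disjoint.symm

theorem LinearMap.range_comp_subtype_of_isCompl_ker {f : E →ₗ[R] M} {q : Submodule R E}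
    (h : IsCompl (LinearMap.ker f) q) : LinearMap.range (f ∘ₗ q.subtype) = LinearMap.range f := by
  rw [LinearMap.range_comp, range_subtype, ← Submodule.map_top, ← h.sup_eq_top, Submodule.map_sup,
    LinearMap.le_ker_iff_map.mp le_rfl, bot_sup_eq]

end

theorem HilbertBasis.separableSpace {ι 𝕜 E : Type*} [Countable ι] [RCLike 𝕜]
    [NormedAddCommGroup E] [InnerProductSpace 𝕜 E] (b : HilbertBasis ι 𝕜 E) :
    SeparableSpace E := by
  rw [← isSeparable_univ_iff, ← dense_iff_topologicalClosure_eq_top.mpr b.dense_span |>.closure_eq]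
  exact (Set.countable_range b).isSeparable.span.closure

theorem Orthonormal.exists_continuousLinearMap_apply_eq {ι 𝕜 E F : Type*} [RCLike 𝕜]
    [NormedAddCommGroup E] [InnerProductSpace 𝕜 E] [NormedAddCommGroup F] [NormedSpace 𝕜 F]
    [CompleteSpace F] {v : ι → E} (hv : Orthonormal 𝕜 v) {y : ι → F}
    (hy : Summable fun i => ‖y i‖) : ∃ T : E →L[𝕜] F, ∀ i, T (v i) = y i := by
  classical
  let f : ι → E →L[𝕜] F := fun i => (innerSL 𝕜 (v i)).smulRight (y i)
  have hf : Summable f := by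
    refine hy.of_norm_bounded fun i => ?_
    rw [ContinuousLinearMap.norm_smulRight_apply, innerSL_apply_norm, hv.1 i, one_mul]
  refine ⟨∑' i, f i, fun i => ?_⟩
  have hfv : (fun j => f j (v i)) = Pi.single i (y i) := by
    ext j
    rcases eq_or_ne j i with rfl | hji
    · simp [f, hv.1 j]
    · simp [f, hv.2 hji, hji]
  have hsum := hf.hasSum.mapL (ContinuousLinearMap.apply 𝕜 F (v i))
  simp only [ContinuousLinearMap.apply_apply, hfv] at hsum
  exact hsum.unique (hasSum_pi_single i (y i))

theorem exists_summable_norm_dense_span {F : Type*} [NormedAddCommGroup F] [NormedSpace ℝ F]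
    [SeparableSpace F] :
    ∃ y : ℕ → F, Summable (fun n => ‖y n‖) ∧ Dense (span ℝ (Set.range y) : Set F) := by
  obtain ⟨x, hx⟩ := exists_dense_seq F
  set c : ℕ → ℝ := fun n => (2 ^ n * (‖x n‖ + 1))⁻¹
  have hc : ∀ n, 0 < c n := fun n => by positivity
  refine ⟨fun n => c n • x n, ?_, hx.mono ?_⟩
  · refine summable_geometric_two.of_nonneg_of_le (fun n => norm_nonneg _) fun n => ?_
    rw [norm_smul, Real.norm_of_nonneg (hc n).le, one_div, inv_pow]
    calc c n * ‖x n‖ = (2 ^ n)⁻¹ * (‖x n‖ / (‖x n‖ + 1)) := by simp only [c]; field_simp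
      _ ≤ (2 ^ n)⁻¹ * 1 := by gcongr; exact div_le_one_of_le₀ (by linarith) (by positivity)
      _ = (2 ^ n)⁻¹ := mul_one _
  · rintro _ ⟨n, rfl⟩
    exact inv_smul_smul₀ (hc n).ne' (x n) ▸ smul_mem _ _ (subset_span ⟨n, rfl⟩)

/-- Every separable Banach space contains a densely and continuously embedded
separable Hilbert space: there is a separable Hilbert space `H` and a continuous
injective linear map `ι : H → W` with dense range. -/
theorem exists_dense_hilbert_embedding
    (W : Type*) [NormedAddCommGroup W] [NormedSpace ℝ W] [CompleteSpace W]
    [TopologicalSpace.SeparableSpace W] :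
    ∃ (H : Type) (_ : NormedAddCommGroup H) (_ : InnerProductSpace ℝ H),
      CompleteSpace H ∧ TopologicalSpace.SeparableSpace H ∧
      ∃ ι : H →L[ℝ] W, Function.Injective ι ∧ DenseRange ι := by
  obtain ⟨y, hy, hy_dense⟩ := exists_summable_norm_dense_span (F := W)
  let b : HilbertBasis ℕ ℝ ℓ²(ℕ, ℝ) := default
  have : SeparableSpace ℓ²(ℕ, ℝ) := b.separableSpace
  obtain ⟨T, hT⟩ := b.orthonormal.exists_continuousLinearMap_apply_eq hy
  set K := LinearMap.ker (T : ℓ²(ℕ, ℝ) →ₗ[ℝ] W)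
  have hK : IsCompl K Kᗮ := K.isCompl_orthogonal
  refine ⟨Kᗮ, inferInstance, inferInstance, inferInstance,
    (IsSeparable.of_separableSpace _).separableSpace, T.comp Kᗮ.subtypeL,
    LinearMap.injective_comp_subtype_of_isCompl_ker hK, ?_⟩
  have hrange : span ℝ (Set.range y) ≤ LinearMap.range ((T : ℓ²(ℕ, ℝ) →ₗ[ℝ] W) ∘ₗ Kᗮ.subtype) :=
    LinearMap.range_comp_subtype_of_isCompl_ker hK ▸
      span_le.mpr (Set.range_subset_iff.mpr fun n => ⟨b n, hT n⟩)
  have hdense := hy_dense.mono hrange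
  rwa [LinearMap.coe_range] at hdense
end
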